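/- Let p ≥ 2, ψ ∈ Ψ, and 1 ≤ r ≤ p. For every point (x,y) and every timelike r-dimensional subspace π of (ℝ^{2p}, g_ψ) (i.e. π of signature (r,0)), the higher order Jacobi operator satisfies rank J(π) = p−1 if r = 1 and rank J(π) = p if r ≥ 2. Since moreover J(π)² = 0, any two higher order Jacobi operators of timelike r-dimensional subspaces are similar: (ℝ^{2p}, g_ψ) is Jordan Osserman of type (r,0). -/

import Mathlib

open scoped BigOperators

/-- The partial derivative `∂ₖ f` at `x`. -/
noncomputable def pd {p : ℕ} (f : (Fin p → ℝ) → ℝ) (k : Fin p) (x : Fin p → ℝ) : ℝ :=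
  fderiv ℝ f x (Pi.single k 1)

/-- The second partial derivative `∂ₖ ∂ₗ f` at `x`. -/
noncomputable def pd2 {p : ℕ} (f : (Fin p → ℝ) → ℝ) (k l : Fin p) (x : Fin p → ℝ) : ℝ :=
  pd (pd f l) k x

/-- The curvature components
`R_ψ(i,j,k,l) := -(1/2)(ψ_{il/jk} + ψ_{jk/il} - ψ_{ik/jl} - ψ_{jl/ik})`,
where `ψ_{ab/cd} := ∂_c ∂_d ψ_{ab}`. -/
noncomputable def curv {p : ℕ} (ψ : (Fin p → ℝ) → Fin p → Fin p → ℝ)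
    (i j k l : Fin p) (x : Fin p → ℝ) : ℝ :=
  -(1/2) * (pd2 (fun y => ψ y i l) j k x + pd2 (fun y => ψ y j k) i l x
    - pd2 (fun y => ψ y i k) j l x - pd2 (fun y => ψ y j l) i k x)

/-- The Jacobi bilinear form `𝒥_ψ(x;X)(Y,Z) := Σ R_ψ(i,j,k,l)(x) Yᵢ Xⱼ Xₖ Zₗ`. -/
noncomputable def jacobiForm {p : ℕ} (ψ : (Fin p → ℝ) → Fin p → Fin p → ℝ)
    (x X Y Z : Fin p → ℝ) : ℝ :=
  ∑ i, ∑ j, ∑ k, ∑ l, curv ψ i j k l x * Y i * X j * X k * Z l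

/-- `ψ` is a smooth symmetric 2-tensor field on `ℝ^p`. -/
def IsSmoothSym {p : ℕ} (ψ : (Fin p → ℝ) → Fin p → Fin p → ℝ) : Prop :=
  (∀ i j, ContDiff ℝ (⊤ : ℕ∞) fun x => ψ x i j) ∧ ∀ x i j, ψ x i j = ψ x j i

/-- Membership in the class `Ψ`: `ψ` is a smooth symmetric 2-tensor field such that for every
`x` and every `X ≠ 0` the Jacobi form `𝒥_ψ(x;X)` is positive semidefinite with null space
exactly the line `ℝ·X` (i.e. positive semidefinite of rank `p-1`). -/
def MemPsi {p : ℕ} (ψ : (Fin p → ℝ) → Fin p → Fin p → ℝ) : Prop :=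
  IsSmoothSym ψ ∧ ∀ (x X : Fin p → ℝ), X ≠ 0 →
    (∀ Y, 0 ≤ jacobiForm ψ x X Y Y) ∧
    ∀ Y, (∀ Z, jacobiForm ψ x X Y Z = 0) ↔ ∃ c : ℝ, Y = c • X

/-- The model space `ℝ^{2p} = ℝ^p × ℝ^p`; `Sum.inl` indexes the `x`-coordinates and
`Sum.inr` the `y`-coordinates. -/
abbrev VV (p : ℕ) := Fin p ⊕ Fin p → ℝ

/-- The neutral signature `(p,p)` metric `g_ψ` at the point with `x`-coordinate `x`:
`g(∂ᵢˣ,∂ⱼʸ) = δᵢⱼ`, `g(∂ᵢʸ,∂ⱼʸ) = 0`, `g(∂ᵢˣ,∂ⱼˣ) = ψᵢⱼ(x)`. -/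
noncomputable def gpsi {p : ℕ} (ψ : (Fin p → ℝ) → Fin p → Fin p → ℝ)
    (x : Fin p → ℝ) (Z W : VV p) : ℝ :=
  (∑ i, Z (Sum.inl i) * W (Sum.inr i)) + (∑ i, Z (Sum.inr i) * W (Sum.inl i))
    + ∑ i, ∑ j, ψ x i j * Z (Sum.inl i) * W (Sum.inl j)

/-- The Jacobi operator `J(x;Z)` of `(ℝ^{2p}, g_ψ)` as a matrix: its image lies in
`𝒴 = span{∂ᵢʸ}` and its `y`-components are
`(J(x;Z)W)_l = Σ_{i,j,k} R_ψ(i,j,k,l)(x) (ρW)ᵢ (ρZ)ⱼ (ρZ)ₖ`. -/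
noncomputable def jacobiMat {p : ℕ} (ψ : (Fin p → ℝ) → Fin p → Fin p → ℝ)
    (x : Fin p → ℝ) (Z : VV p) : Matrix (Fin p ⊕ Fin p) (Fin p ⊕ Fin p) ℝ :=
  Matrix.of fun a b =>
    match a, b with
    | Sum.inr l, Sum.inl i => ∑ j, ∑ k, curv ψ i j k l x * Z (Sum.inl j) * Z (Sum.inl k)
    | _, _ => 0

/-- `π` is a nondegenerate subspace of signature `(r,s)` for the symmetric bilinear form `g`:
`g` restricted to `π` is nondegenerate, the maximal dimension of a negative definite subspace
of `π` is `r`, and the maximal dimension of a positive definite subspace of `π` is `s`. -/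
def HasSignature {V : Type*} [AddCommGroup V] [Module ℝ V] (g : V → V → ℝ)
    (π : Submodule ℝ V) (r s : ℕ) : Prop :=
  (∀ z ∈ π, (∀ w ∈ π, g z w = 0) → z = 0) ∧
  (∃ W : Submodule ℝ V, W ≤ π ∧ Module.finrank ℝ W = r ∧ ∀ z ∈ W, z ≠ 0 → g z z < 0) ∧
  (∀ W : Submodule ℝ V, W ≤ π → (∀ z ∈ W, z ≠ 0 → g z z < 0) → Module.finrank ℝ W ≤ r) ∧
  (∃ W : Submodule ℝ V, W ≤ π ∧ Module.finrank ℝ W = s ∧ ∀ z ∈ W, z ≠ 0 → 0 < g z z) ∧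
  (∀ W : Submodule ℝ V, W ≤ π → (∀ z ∈ W, z ≠ 0 → 0 < g z z) → Module.finrank ℝ W ≤ s)

/-- `e` is a `g`-orthonormal basis of `π` with signs `ε i = g(e i, e i) = ±1`. -/
def IsOrthoBasis {V : Type*} [AddCommGroup V] [Module ℝ V] (g : V → V → ℝ)
    (π : Submodule ℝ V) {n : ℕ} (e : Fin n → V) (ε : Fin n → ℝ) : Prop :=
  Submodule.span ℝ (Set.range e) = π ∧ (∀ i, ε i = 1 ∨ ε i = -1) ∧
    ∀ i j, g (e i) (e j) = if i = j then ε i else 0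

/-- The higher order Jacobi operator `J(π) := Σᵢ εᵢ J(x; eᵢ)` determined by a
`g_ψ`-orthonormal basis `e` with signs `ε` of a nondegenerate subspace. -/
noncomputable def hoJ {p : ℕ} (ψ : (Fin p → ℝ) → Fin p → Fin p → ℝ) (x : Fin p → ℝ)
    {n : ℕ} (e : Fin n → VV p) (ε : Fin n → ℝ) :
    Matrix (Fin p ⊕ Fin p) (Fin p ⊕ Fin p) ℝ :=
  ∑ i, ε i • jacobiMat ψ x (e i)

/-- Two square matrices are similar (conjugate), i.e. they have the same Jordan normal form. -/
def MatSimilar {ι : Type*} [Fintype ι] [DecidableEq ι] (A B : Matrix ι ι ℝ) : Prop :=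
  ∃ P : Matrix ι ι ℝ, IsUnit P.det ∧ A = P * B * P⁻¹

/-! ### Auxiliary lemmas -/

section Aux

lemma pd2_symm {p : ℕ} {f : (Fin p → ℝ) → ℝ} (hf : ContDiff ℝ (⊤ : ℕ∞) f) (k l : Fin p)
    (x : Fin p → ℝ) : pd2 f k l x = pd2 f l k x := by
  have hfd : ContDiff ℝ (⊤ : ℕ∞) (fderiv ℝ f) := hf.fderiv_right (by simp)
  have key : ∀ a b : Fin p, pd2 f a b x
      = fderiv ℝ (fderiv ℝ f) x (Pi.single a 1) (Pi.single b 1) := by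
    intro a b
    simp only [pd2]
    have hpd : pd f b = fun y => fderiv ℝ f y (Pi.single b 1) := rfl
    rw [pd, hpd]
    rw [fderiv_clm_apply (c := fderiv ℝ f) (u := fun _ => Pi.single b 1)
      ((hfd.differentiable (by simp)).differentiableAt) (differentiableAt_const _)]
    simp
  rw [key, key]
  exact (hf.contDiffAt.isSymmSndFDerivAt (by rw [minSmoothness_of_isRCLikeNormedField]; exact WithTop.coe_le_coe.mpr le_top)) _ _

variable {p : ℕ} {ψ : (Fin p → ℝ) → Fin p → Fin p → ℝ}

lemma curv_symm (h : IsSmoothSym ψ) (i j k l : Fin p) (x : Fin p → ℝ) :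
    curv ψ l k j i x = curv ψ i j k l x := by
  obtain ⟨hsm, hsym⟩ := h
  have e1 : (fun y => ψ y l i) = fun y => ψ y i l := funext fun y => hsym y l i
  have e2 : (fun y => ψ y k j) = fun y => ψ y j k := funext fun y => hsym y k j
  have e3 : (fun y => ψ y l j) = fun y => ψ y j l := funext fun y => hsym y l j
  have e4 : (fun y => ψ y k i) = fun y => ψ y i k := funext fun y => hsym y k i
  unfold curv
  rw [e1, e2, e3, e4, pd2_symm (hsm i l) k j, pd2_symm (hsm j k) l i,
    pd2_symm (hsm j l) k i, pd2_symm (hsm i k) l j]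
  ring

/-- generic 4-fold sum reindexing -/
lemma sum4_reindex {M : Type*} [AddCommMonoid M] {ι : Type*} [Fintype ι]
    (σ : ι × ι × ι × ι ≃ ι × ι × ι × ι) (F : ι × ι × ι × ι → M) :
    ∑ i, ∑ j, ∑ k, ∑ l, F (i, j, k, l) = ∑ i, ∑ j, ∑ k, ∑ l, F (σ (i, j, k, l)) := by
  have h : ∀ G : ι × ι × ι × ι → M,
      ∑ x : ι × ι × ι × ι, G x = ∑ i, ∑ j, ∑ k, ∑ l, G (i, j, k, l) := by
    intro G
    rw [Fintype.sum_prod_type]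
    refine Finset.sum_congr rfl fun i _ => ?_
    rw [Fintype.sum_prod_type]
    refine Finset.sum_congr rfl fun j _ => ?_
    rw [Fintype.sum_prod_type]
  rw [← h F, ← h (fun x => F (σ x))]
  exact (Fintype.sum_equiv σ _ _ fun x => rfl).symm

lemma jacobiForm_symm (h : IsSmoothSym ψ) (x X Y Z : Fin p → ℝ) :
    jacobiForm ψ x X Y Z = jacobiForm ψ x X Z Y := by
  unfold jacobiForm
  rw [sum4_reindex ⟨fun q => (q.2.2.2, q.2.2.1, q.2.1, q.1),
    fun q => (q.2.2.2, q.2.2.1, q.2.1, q.1), fun q => rfl, fun q => rfl⟩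
    (fun q => curv ψ q.1 q.2.1 q.2.2.1 q.2.2.2 x * Y q.1 * X q.2.1 * X q.2.2.1 * Z q.2.2.2)]
  refine Finset.sum_congr rfl fun i _ => Finset.sum_congr rfl fun j _ =>
    Finset.sum_congr rfl fun k _ => Finset.sum_congr rfl fun l _ => ?_
  simp only [Equiv.coe_fn_mk]
  rw [curv_symm h i j k l x]
  ring

noncomputable def jrow (ψ : (Fin p → ℝ) → Fin p → Fin p → ℝ) (x X Y : Fin p → ℝ)
    (l : Fin p) : ℝ :=
  ∑ i, ∑ j, ∑ k, curv ψ i j k l x * Y i * X j * X k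

lemma jacobiForm_eq (x X Y Z : Fin p → ℝ) :
    jacobiForm ψ x X Y Z = ∑ l, jrow ψ x X Y l * Z l := by
  unfold jacobiForm jrow
  rw [sum4_reindex ⟨fun q => (q.2.1, q.2.2.1, q.2.2.2, q.1),
    fun q => (q.2.2.2, q.1, q.2.1, q.2.2.1), fun q => rfl, fun q => rfl⟩
    (fun q => curv ψ q.1 q.2.1 q.2.2.1 q.2.2.2 x * Y q.1 * X q.2.1 * X q.2.2.1 * Z q.2.2.2)]
  simp only [Finset.sum_mul]
  rfl

lemma jrow_eq_single (x X Y : Fin p → ℝ) (l : Fin p) :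
    jrow ψ x X Y l = jacobiForm ψ x X Y (Pi.single l 1) := by
  rw [jacobiForm_eq]
  simp [Pi.single_apply, mul_ite]

lemma jacobiForm_smul_right (x X Y Z : Fin p → ℝ) (c : ℝ) :
    jacobiForm ψ x X Y (c • Z) = c * jacobiForm ψ x X Y Z := by
  rw [jacobiForm_eq, jacobiForm_eq, Finset.mul_sum]
  exact Finset.sum_congr rfl fun l _ => by simp; ring

lemma jacobiForm_add_right (x X Y Z₁ Z₂ : Fin p → ℝ) :
    jacobiForm ψ x X Y (Z₁ + Z₂) = jacobiForm ψ x X Y Z₁ + jacobiForm ψ x X Y Z₂ := by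
  rw [jacobiForm_eq, jacobiForm_eq, jacobiForm_eq, ← Finset.sum_add_distrib]
  exact Finset.sum_congr rfl fun l _ => by simp [Pi.add_apply]; ring

lemma jrow_smul (x X Y : Fin p → ℝ) (c : ℝ) (l : Fin p) :
    jrow ψ x X (c • Y) l = c * jrow ψ x X Y l := by
  unfold jrow
  simp only [Finset.mul_sum]
  refine Finset.sum_congr rfl fun i _ => Finset.sum_congr rfl fun j _ =>
    Finset.sum_congr rfl fun k _ => ?_
  simp [Pi.smul_apply]; ring

lemma jrow_add (x X Y₁ Y₂ : Fin p → ℝ) (l : Fin p) :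
    jrow ψ x X (Y₁ + Y₂) l = jrow ψ x X Y₁ l + jrow ψ x X Y₂ l := by
  unfold jrow
  simp only [← Finset.sum_add_distrib]
  refine Finset.sum_congr rfl fun i _ => Finset.sum_congr rfl fun j _ =>
    Finset.sum_congr rfl fun k _ => ?_
  simp [Pi.add_apply]; ring

lemma jacobiForm_smul_left (x X Y Z : Fin p → ℝ) (c : ℝ) :
    jacobiForm ψ x X (c • Y) Z = c * jacobiForm ψ x X Y Z := by
  rw [jacobiForm_eq, jacobiForm_eq, Finset.mul_sum]
  exact Finset.sum_congr rfl fun l _ => by rw [jrow_smul]; ring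

lemma jacobiForm_add_left (x X Y₁ Y₂ Z : Fin p → ℝ) :
    jacobiForm ψ x X (Y₁ + Y₂) Z = jacobiForm ψ x X Y₁ Z + jacobiForm ψ x X Y₂ Z := by
  rw [jacobiForm_eq, jacobiForm_eq, jacobiForm_eq, ← Finset.sum_add_distrib]
  exact Finset.sum_congr rfl fun l _ => by rw [jrow_add]; ring

/-- Positive semidefinite + zero diagonal value forces vanishing of the bilinear form. -/
lemma null_of_psd (hψ : MemPsi ψ) {x X : Fin p → ℝ} (hX : X ≠ 0) {Y : Fin p → ℝ}
    (hY : jacobiForm ψ x X Y Y = 0) : ∀ Z, jacobiForm ψ x X Y Z = 0 := by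
  intro Z
  set b := jacobiForm ψ x X Y Z with hb
  set c := jacobiForm ψ x X Z Z with hc
  have hc0 : 0 ≤ c := (hψ.2 x X hX).1 Z
  have hsym : jacobiForm ψ x X Z Y = b := by rw [hb, jacobiForm_symm hψ.1]
  set t : ℝ := -b / (c + 1) with ht
  have hexp : jacobiForm ψ x X (Y + t • Z) (Y + t • Z) = 2 * t * b + t ^ 2 * c := by
    rw [jacobiForm_add_left, jacobiForm_add_right, jacobiForm_add_right,
      jacobiForm_smul_left, jacobiForm_smul_left, jacobiForm_smul_right,
      jacobiForm_smul_right, hY, hsym, ← hb, ← hc]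
    ring
  have hpos := (hψ.2 x X hX).1 (Y + t • Z)
  rw [hexp] at hpos
  have hc1 : (0:ℝ) < c + 1 := by linarith
  rw [ht] at hpos
  have h2 : 0 ≤ (2 * (-b / (c + 1)) * b + (-b / (c + 1)) ^ 2 * c) * (c + 1) ^ 2 :=
    mul_nonneg hpos (by positivity)
  have h3 : (2 * (-b / (c + 1)) * b + (-b / (c + 1)) ^ 2 * c) * (c + 1) ^ 2
      = -(b ^ 2 * (c + 2)) := by field_simp; ring
  rw [h3] at h2
  nlinarith [sq_nonneg b]

end Aux

section Gpsi

variable {p : ℕ} {ψ : (Fin p → ℝ) → Fin p → Fin p → ℝ}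

lemma gpsi_add_left (x : Fin p → ℝ) (Z₁ Z₂ W : VV p) :
    gpsi ψ x (Z₁ + Z₂) W = gpsi ψ x Z₁ W + gpsi ψ x Z₂ W := by
  unfold gpsi
  simp only [Pi.add_apply, add_mul, mul_add, Finset.sum_add_distrib]
  ring

lemma gpsi_smul_left (x : Fin p → ℝ) (c : ℝ) (Z W : VV p) :
    gpsi ψ x (c • Z) W = c * gpsi ψ x Z W := by
  unfold gpsi
  simp only [Pi.smul_apply, smul_eq_mul, mul_add, Finset.mul_sum]
  congr 1
  · congr 1
    · exact Finset.sum_congr rfl fun i _ => by ring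
    · exact Finset.sum_congr rfl fun i _ => by ring
  · exact Finset.sum_congr rfl fun i _ => Finset.sum_congr rfl fun j _ => by ring

lemma gpsi_add_right (x : Fin p → ℝ) (Z W₁ W₂ : VV p) :
    gpsi ψ x Z (W₁ + W₂) = gpsi ψ x Z W₁ + gpsi ψ x Z W₂ := by
  unfold gpsi
  simp only [Pi.add_apply, add_mul, mul_add, Finset.sum_add_distrib]
  ring

lemma gpsi_smul_right (x : Fin p → ℝ) (c : ℝ) (Z W : VV p) :
    gpsi ψ x Z (c • W) = c * gpsi ψ x Z W := by
  unfold gpsi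
  simp only [Pi.smul_apply, smul_eq_mul, mul_add, Finset.mul_sum]
  congr 1
  · congr 1
    · exact Finset.sum_congr rfl fun i _ => by ring
    · exact Finset.sum_congr rfl fun i _ => by ring
  · exact Finset.sum_congr rfl fun i _ => Finset.sum_congr rfl fun j _ => by ring

lemma gpsi_zero_of_null (x : Fin p → ℝ) {Z : VV p} (h : ∀ i, Z (Sum.inl i) = 0) :
    gpsi ψ x Z Z = 0 := by
  simp [gpsi, h]

end Gpsi

section Block

variable {p : ℕ} {ψ : (Fin p → ℝ) → Fin p → Fin p → ℝ}

/-- x-projection -/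
def xproj {p : ℕ} (v : VV p) : Fin p → ℝ := fun i => v (Sum.inl i)

noncomputable def Mblk (ψ : (Fin p → ℝ) → Fin p → Fin p → ℝ) (x : Fin p → ℝ) {n : ℕ}
    (e : Fin n → VV p) (ε : Fin n → ℝ) : Matrix (Fin p) (Fin p) ℝ :=
  Matrix.of fun l i =>
    ∑ m, ε m * ∑ j, ∑ k, curv ψ i j k l x * e m (Sum.inl j) * e m (Sum.inl k)

lemma hoJ_eq (x : Fin p → ℝ) {n : ℕ} (e : Fin n → VV p) (ε : Fin n → ℝ) :
    hoJ ψ x e ε = Matrix.fromBlocks 0 0 (Mblk ψ x e ε) 0 := by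
  ext a b
  simp only [hoJ, Matrix.sum_apply, Matrix.smul_apply, smul_eq_mul]
  cases a with
  | inl a => cases b with
    | inl b => simp [jacobiMat, Matrix.fromBlocks]
    | inr b => simp [jacobiMat, Matrix.fromBlocks]
  | inr a => cases b with
    | inl b => simp [jacobiMat, Matrix.fromBlocks, Mblk]
    | inr b => simp [jacobiMat, Matrix.fromBlocks]

lemma hoJ_sq (x : Fin p → ℝ) {n : ℕ} (e : Fin n → VV p) (ε : Fin n → ℝ) :
    hoJ ψ x e ε * hoJ ψ x e ε = 0 := by
  rw [hoJ_eq, Matrix.fromBlocks_multiply]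
  simp

lemma Mblk_mulVec (x : Fin p → ℝ) {n : ℕ} (e : Fin n → VV p) (ε : Fin n → ℝ)
    (Y : Fin p → ℝ) :
    (Mblk ψ x e ε).mulVec Y = fun l => ∑ m, ε m * jrow ψ x (xproj (e m)) Y l := by
  funext l
  simp only [Matrix.mulVec, dotProduct, Mblk, Matrix.of_apply]
  simp only [jrow, xproj, Finset.sum_mul, Finset.mul_sum]
  rw [Finset.sum_comm]
  exact Finset.sum_congr rfl fun m _ => Finset.sum_congr rfl fun i _ =>
    Finset.sum_congr rfl fun j _ => Finset.sum_congr rfl fun k _ => by ring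

lemma Mblk_ker_iff (x : Fin p → ℝ) {n : ℕ} (e : Fin n → VV p) (ε : Fin n → ℝ)
    (hε : ∀ m, ε m = -1) (Y : Fin p → ℝ) :
    (Mblk ψ x e ε).mulVec Y = 0 ↔
      ∀ Z, ∑ m, jacobiForm ψ x (xproj (e m)) Y Z = 0 := by
  rw [Mblk_mulVec]
  constructor
  · intro h Z
    have hl : ∀ l, ∑ m, jrow ψ x (xproj (e m)) Y l = 0 := by
      intro l
      have h0 := congrFun h l
      simp only [hε, neg_one_mul, Finset.sum_neg_distrib, neg_eq_zero, Pi.zero_apply] at h0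
      exact h0
    simp only [jacobiForm_eq]
    rw [Finset.sum_comm]
    exact Finset.sum_eq_zero fun l _ => by rw [← Finset.sum_mul, hl l, zero_mul]
  · intro h
    funext l
    have h0 := h (Pi.single l 1)
    simp only [← jrow_eq_single] at h0
    simp only [hε, neg_one_mul, Finset.sum_neg_distrib, Pi.zero_apply, neg_eq_zero]
    exact h0

end Block

section RankMach

open Module LinearMap

/-- embedding of the second block -/
def inrMap (p : ℕ) : (Fin p → ℝ) →ₗ[ℝ] VV p where
  toFun w := Sum.elim 0 w
  map_add' u v := by funext a; cases a <;> simp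
  map_smul' c v := by funext a; cases a <;> simp

lemma inrMap_inj (p : ℕ) : Function.Injective (inrMap p) := by
  intro u v h
  funext i
  exact congrFun h (Sum.inr i)

lemma fb_mulVec {p : ℕ} (M : Matrix (Fin p) (Fin p) ℝ) (v : VV p) :
    (Matrix.fromBlocks 0 0 M 0).mulVec v
      = Sum.elim (0 : Fin p → ℝ) (M.mulVec (v ∘ Sum.inl)) := by
  have hv : v = Sum.elim (v ∘ Sum.inl) (v ∘ Sum.inr) := by funext a; cases a <;> rfl
  calc (Matrix.fromBlocks 0 0 M 0).mulVec v
      = (Matrix.fromBlocks 0 0 M 0).mulVec (Sum.elim (v ∘ Sum.inl) (v ∘ Sum.inr)) := by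
        rw [← hv]
    _ = Sum.elim (0 : Fin p → ℝ) (M.mulVec (v ∘ Sum.inl)) := by
        rw [Matrix.fromBlocks_mulVec]
        simp [Matrix.zero_mulVec]

lemma rank_fb {p : ℕ} (M : Matrix (Fin p) (Fin p) ℝ) :
    (Matrix.fromBlocks (0 : Matrix (Fin p) (Fin p) ℝ) 0 M (0 : Matrix (Fin p) (Fin p) ℝ)).rank = M.rank := by
  have hrange : LinearMap.range (Matrix.fromBlocks (0 : Matrix (Fin p) (Fin p) ℝ) 0 M (0 : Matrix (Fin p) (Fin p) ℝ)).mulVecLin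
      = Submodule.map (inrMap p) (LinearMap.range M.mulVecLin) := by
    apply le_antisymm
    · rintro w ⟨v, rfl⟩
      exact ⟨M.mulVec (v ∘ Sum.inl), ⟨v ∘ Sum.inl, rfl⟩,
        by rw [Matrix.mulVecLin_apply, fb_mulVec]; rfl⟩
    · rintro w ⟨w', ⟨u, rfl⟩, rfl⟩
      refine ⟨Sum.elim u (0 : Fin p → ℝ), ?_⟩
      rw [Matrix.mulVecLin_apply, fb_mulVec]
      simp only [Sum.elim_comp_inl]
      rfl
  show Module.finrank ℝ _ = Module.finrank ℝ _
  rw [hrange]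
  exact (LinearEquiv.finrank_eq
    (Submodule.equivMapOfInjective _ (inrMap_inj p) _)).symm

/-- adapted bases for a linear endomorphism of `ℝ^n` -/
lemma adapted_basis {n : ℕ} (f : (Fin n → ℝ) →ₗ[ℝ] (Fin n → ℝ)) :
    ∃ (inB : Basis (Fin (finrank ℝ (LinearMap.range f))
        ⊕ Fin (n - finrank ℝ (LinearMap.range f))) ℝ (Fin n → ℝ))
      (outB : Basis (Fin (finrank ℝ (LinearMap.range f))
        ⊕ Fin (n - finrank ℝ (LinearMap.range f))) ℝ (Fin n → ℝ)),
      (∀ i, f (inB (Sum.inl i)) = outB (Sum.inl i)) ∧ (∀ j, f (inB (Sum.inr j)) = 0) := by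
  set K := LinearMap.ker f with hKdef
  set R := LinearMap.range f with hRdef
  obtain ⟨C, hC⟩ := Submodule.exists_isCompl K
  obtain ⟨D, hD⟩ := Submodule.exists_isCompl R
  -- the equivalence C ≃ R induced by f
  let f₀ : C →ₗ[ℝ] R :=
    LinearMap.codRestrict R (f.domRestrict C) fun c => LinearMap.mem_range_self f (c : Fin n → ℝ)
  have hinj : Function.Injective f₀ := by
    intro c₁ c₂ hcc
    have hf : f (c₁ : Fin n → ℝ) = f (c₂ : Fin n → ℝ) := congrArg Subtype.val hcc
    have hmem : ((c₁ : Fin n → ℝ) - c₂) ∈ K := by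
      rw [hKdef, LinearMap.mem_ker, map_sub, hf, sub_self]
    have hmemC : ((c₁ : Fin n → ℝ) - c₂) ∈ C := sub_mem c₁.2 c₂.2
    have : ((c₁ : Fin n → ℝ) - c₂) = 0 :=
      (Submodule.disjoint_def.mp hC.disjoint) _ hmem hmemC
    exact Subtype.ext (sub_eq_zero.mp this)
  have hsurj : Function.Surjective f₀ := by
    rintro ⟨y, v, hv⟩
    have hvmem : v ∈ K ⊔ C := by rw [hC.sup_eq_top]; trivial
    obtain ⟨k, hk, c, hc, hkc⟩ := Submodule.mem_sup.mp hvmem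
    refine ⟨⟨c, hc⟩, Subtype.ext ?_⟩
    show f c = y
    have : f v = y := hv
    rw [← this, ← hkc, map_add]
    rw [hKdef] at hk
    rw [LinearMap.mem_ker.mp hk, zero_add]
  let φ : C ≃ₗ[ℝ] R := LinearEquiv.ofBijective f₀ ⟨hinj, hsurj⟩
  have hφ : ∀ c : C, (φ c : Fin n → ℝ) = f c := fun c => rfl
  -- dimension bookkeeping
  have hfin : finrank ℝ (Fin n → ℝ) = n := Module.finrank_fin_fun (R := ℝ)
  have hCR : finrank ℝ C = finrank ℝ R := φ.finrank_eq
  have hKC := Submodule.finrank_add_eq_of_isCompl hC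
  have hRD := Submodule.finrank_add_eq_of_isCompl hD
  rw [hfin] at hKC hRD
  have hKval : finrank ℝ K = n - finrank ℝ R := by omega
  have hDval : finrank ℝ D = n - finrank ℝ R := by omega
  -- bases
  let bC : Basis (Fin (finrank ℝ R)) ℝ C :=
    (Module.finBasis ℝ C).reindex (finCongr hCR)
  let bK : Basis (Fin (n - finrank ℝ R)) ℝ K :=
    (Module.finBasis ℝ K).reindex (finCongr hKval)
  let bD : Basis (Fin (n - finrank ℝ R)) ℝ D :=
    (Module.finBasis ℝ D).reindex (finCongr hDval)
  let inB := (bC.prod bK).map (Submodule.prodEquivOfIsCompl C K hC.symm)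
  let outB := ((bC.map φ).prod bD).map (Submodule.prodEquivOfIsCompl R D hD)
  refine ⟨inB, outB, fun i => ?_, fun j => ?_⟩
  · have h1 : inB (Sum.inl i) = (bC i : Fin n → ℝ) := by
      simp [inB, Basis.prod_apply, Submodule.coe_prodEquivOfIsCompl']
    have h2 : outB (Sum.inl i) = (φ (bC i) : Fin n → ℝ) := by
      simp [outB, Basis.prod_apply, Submodule.coe_prodEquivOfIsCompl']
    rw [h1, h2, ← hφ]
  · have h1 : inB (Sum.inr j) = (bK j : Fin n → ℝ) := by
      simp [inB, Basis.prod_apply, Submodule.coe_prodEquivOfIsCompl']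
    rw [h1]
    exact LinearMap.mem_ker.mp (bK j).2

/-- matrices of equal rank are equivalent -/
lemma exists_mul_eq_of_rank_eq {n : ℕ} (M N : Matrix (Fin n) (Fin n) ℝ)
    (h : M.rank = N.rank) :
    ∃ W U : Matrix (Fin n) (Fin n) ℝ, IsUnit W.det ∧ IsUnit U.det ∧ M = W * N * U := by
  set f := M.mulVecLin with hfdef
  set g := N.mulVecLin with hgdef
  obtain ⟨inF, outF, hF1, hF2⟩ := adapted_basis f
  obtain ⟨inG, outG, hG1, hG2⟩ := adapted_basis g
  have h' : finrank ℝ (LinearMap.range f) = finrank ℝ (LinearMap.range g) := h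
  let eIdx : (Fin (finrank ℝ (LinearMap.range f)) ⊕ Fin (n - finrank ℝ (LinearMap.range f)))
      ≃ (Fin (finrank ℝ (LinearMap.range g)) ⊕ Fin (n - finrank ℝ (LinearMap.range g))) :=
    Equiv.sumCongr (finCongr h') (finCongr (by rw [h']))
  let A : (Fin n → ℝ) ≃ₗ[ℝ] (Fin n → ℝ) := inF.equiv inG eIdx
  let B : (Fin n → ℝ) ≃ₗ[ℝ] (Fin n → ℝ) := outG.equiv outF eIdx.symm
  have hfg : f = B.toLinearMap ∘ₗ (g ∘ₗ A.toLinearMap) := by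
    apply Basis.ext inF
    intro i
    cases i with
    | inl i =>
      have hA : A (inF (Sum.inl i)) = inG (eIdx (Sum.inl i)) := inF.equiv_apply _ inG eIdx
      have hB : B (outG (eIdx (Sum.inl i))) = outF (eIdx.symm (eIdx (Sum.inl i))) :=
        outG.equiv_apply _ outF eIdx.symm
      simp only [LinearMap.comp_apply, LinearEquiv.coe_coe, hA]
      have hei : eIdx (Sum.inl i) = Sum.inl (finCongr h' i) := rfl
      rw [hei, hG1, ← hei, hB, Equiv.symm_apply_apply]
      exact hF1 i
    | inr j =>
      have hA : A (inF (Sum.inr j)) = inG (eIdx (Sum.inr j)) := inF.equiv_apply _ inG eIdx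
      simp only [LinearMap.comp_apply, LinearEquiv.coe_coe, hA]
      have hei : eIdx (Sum.inr j) = Sum.inr (finCongr (by rw [h']) j) := rfl
      rw [hei, hG2, map_zero]
      exact hF2 j
  refine ⟨LinearMap.toMatrix' B.toLinearMap, LinearMap.toMatrix' A.toLinearMap, ?_, ?_, ?_⟩
  · have hone : LinearMap.toMatrix' B.toLinearMap * LinearMap.toMatrix' B.symm.toLinearMap
        = 1 := by
      rw [← LinearMap.toMatrix'_comp]
      have : B.toLinearMap ∘ₗ B.symm.toLinearMap = LinearMap.id := by
        ext v; simp
      rw [this, LinearMap.toMatrix'_id]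
    exact Matrix.isUnit_det_of_right_inverse hone
  · have hone : LinearMap.toMatrix' A.toLinearMap * LinearMap.toMatrix' A.symm.toLinearMap
        = 1 := by
      rw [← LinearMap.toMatrix'_comp]
      have : A.toLinearMap ∘ₗ A.symm.toLinearMap = LinearMap.id := by
        ext v; simp
      rw [this, LinearMap.toMatrix'_id]
    exact Matrix.isUnit_det_of_right_inverse hone
  · have hM : M = LinearMap.toMatrix' f := by
      rw [hfdef, ← Matrix.toLin'_apply' M, LinearMap.toMatrix'_toLin']
    have hN : N = LinearMap.toMatrix' g := by
      rw [hgdef, ← Matrix.toLin'_apply' N, LinearMap.toMatrix'_toLin']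
    rw [hM, hfg, LinearMap.toMatrix'_comp, LinearMap.toMatrix'_comp, ← hN, mul_assoc]

end RankMach

section Sig

open Module

variable {p : ℕ} {ψ : (Fin p → ℝ) → Fin p → Fin p → ℝ} {x : Fin p → ℝ}
  {π : Submodule ℝ (VV p)} {r : ℕ} {e : Fin r → VV p} {ε : Fin r → ℝ}

lemma eps_neg_one (hsig : HasSignature (gpsi ψ x) π r 0)
    (hob : IsOrthoBasis (gpsi ψ x) π e ε) : ∀ m, ε m = -1 := by
  intro m
  obtain ⟨hspan, hpm, hortho⟩ := hob
  rcases hpm m with h1 | h1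
  · exfalso
    have hem : e m ∈ π := hspan ▸ Submodule.subset_span (Set.mem_range_self m)
    have hgm : gpsi ψ x (e m) (e m) = ε m := by rw [hortho m m, if_pos rfl]
    have hne : e m ≠ 0 := by
      intro h0
      rw [h0, gpsi_zero_of_null x (fun i => rfl)] at hgm
      rw [h1] at hgm
      norm_num at hgm
    have hWle : (ℝ ∙ e m) ≤ π := by
      rw [Submodule.span_le]; simpa [Set.singleton_subset_iff] using hem
    have hpos : ∀ z ∈ (ℝ ∙ e m), z ≠ 0 → 0 < gpsi ψ x z z := by
      intro z hz hz0
      obtain ⟨a, ha⟩ := Submodule.mem_span_singleton.mp hz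
      have ha0 : a ≠ 0 := by rintro rfl; simp at ha; exact hz0 ha.symm
      rw [← ha, gpsi_smul_left, gpsi_smul_right, hgm, h1, mul_one]
      exact mul_self_pos.mpr ha0
    have hle := hsig.2.2.2.2 (ℝ ∙ e m) hWle hpos
    rw [finrank_span_singleton hne] at hle
    omega
  · exact h1

lemma xproj_ne_zero (hob : IsOrthoBasis (gpsi ψ x) π e ε) : ∀ m, xproj (e m) ≠ 0 := by
  intro m h0
  have hz : gpsi ψ x (e m) (e m) = 0 :=
    gpsi_zero_of_null x (fun i => congrFun h0 i)
  rw [hob.2.2 m m, if_pos rfl] at hz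
  rcases hob.2.1 m with h1 | h1 <;> rw [h1] at hz <;> norm_num at hz

lemma xproj_indep (hsig : HasSignature (gpsi ψ x) π r 0)
    (hob : IsOrthoBasis (gpsi ψ x) π e ε) (hr2 : 2 ≤ r)
    (i0 i1 : Fin r) (hne : i0 ≠ i1) :
    ∀ a b : ℝ, a • xproj (e i0) + b • xproj (e i1) = 0 → a = 0 ∧ b = 0 := by
  have hε := eps_neg_one hsig hob
  intro a b hab
  set Z : VV p := a • e i0 + b • e i1 with hZ
  have hZ0 : ∀ i, Z (Sum.inl i) = 0 := by
    intro i
    have h := congrFun hab i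
    simpa [hZ, xproj] using h
  have h1 : gpsi ψ x Z Z = 0 := gpsi_zero_of_null x hZ0
  have h2 : gpsi ψ x Z Z = -(a ^ 2) - b ^ 2 := by
    rw [hZ, gpsi_add_left, gpsi_smul_left, gpsi_smul_left, gpsi_add_right, gpsi_add_right,
      gpsi_smul_right, gpsi_smul_right, gpsi_smul_right, gpsi_smul_right,
      hob.2.2 i0 i0, hob.2.2 i0 i1, hob.2.2 i1 i0, hob.2.2 i1 i1,
      if_pos rfl, if_pos rfl, if_neg hne, if_neg (Ne.symm hne), hε i0, hε i1]
    ring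
  rw [h2] at h1
  constructor <;> nlinarith [sq_nonneg a, sq_nonneg b]

lemma Mblk_rank (hψ : MemPsi ψ) (hr1 : 1 ≤ r)
    (hsig : HasSignature (gpsi ψ x) π r 0) (hob : IsOrthoBasis (gpsi ψ x) π e ε) :
    (Mblk ψ x e ε).rank = if r = 1 then p - 1 else p := by
  have hε := eps_neg_one hsig hob
  have hX : ∀ m, xproj (e m) ≠ 0 := xproj_ne_zero hob
  have hrn : (Mblk ψ x e ε).rank
      + finrank ℝ (LinearMap.ker (Mblk ψ x e ε).mulVecLin) = p := by
    have h := LinearMap.finrank_range_add_finrank_ker (Mblk ψ x e ε).mulVecLin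
    rw [Module.finrank_fin_fun (R := ℝ)] at h
    exact h
  by_cases h1 : r = 1
  · subst h1
    have hker : LinearMap.ker (Mblk ψ x e ε).mulVecLin = ℝ ∙ (xproj (e 0)) := by
      ext Y
      rw [LinearMap.mem_ker, Matrix.mulVecLin_apply, Mblk_ker_iff x e ε hε Y]
      constructor
      · intro h
        have h' : ∀ Z, jacobiForm ψ x (xproj (e 0)) Y Z = 0 := by
          intro Z
          have := h Z
          simpa [Fin.sum_univ_one] using this
        obtain ⟨c, hc⟩ := ((hψ.2 x (xproj (e 0)) (hX 0)).2 Y).mp h'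
        exact Submodule.mem_span_singleton.mpr ⟨c, hc.symm⟩
      · intro hY Z
        obtain ⟨c, hc⟩ := Submodule.mem_span_singleton.mp hY
        rw [Fin.sum_univ_one]
        exact ((hψ.2 x (xproj (e 0)) (hX 0)).2 Y).mpr ⟨c, hc.symm⟩ Z
    rw [if_pos rfl]
    rw [hker, finrank_span_singleton (hX 0)] at hrn
    omega
  · have hr2 : 2 ≤ r := by omega
    set i0 : Fin r := ⟨0, by omega⟩ with hi0
    set i1 : Fin r := ⟨1, by omega⟩ with hi1
    have hne01 : i0 ≠ i1 := by simp [hi0, hi1, Fin.ext_iff]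
    have hker : LinearMap.ker (Mblk ψ x e ε).mulVecLin = ⊥ := by
      rw [Submodule.eq_bot_iff]
      intro Y hY
      rw [LinearMap.mem_ker] at hY
      have hY' := (Mblk_ker_iff x e ε hε Y).mp hY
      have hsum := hY' Y
      have hnn : ∀ m ∈ Finset.univ, (0:ℝ) ≤ jacobiForm ψ x (xproj (e m)) Y Y :=
        fun m _ => (hψ.2 x _ (hX m)).1 Y
      have hzero := (Finset.sum_eq_zero_iff_of_nonneg hnn).mp hsum
      obtain ⟨c0, hc0⟩ := ((hψ.2 x _ (hX i0)).2 Y).mp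
        (null_of_psd hψ (hX i0) (hzero i0 (Finset.mem_univ _)))
      obtain ⟨c1, hc1⟩ := ((hψ.2 x _ (hX i1)).2 Y).mp
        (null_of_psd hψ (hX i1) (hzero i1 (Finset.mem_univ _)))
      have hzsum : c0 • xproj (e i0) + (-c1) • xproj (e i1) = 0 := by
        rw [neg_smul, ← hc1, ← hc0, add_neg_cancel]
      obtain ⟨hz0, _⟩ := xproj_indep hsig hob hr2 i0 i1 hne01 c0 (-c1) hzsum
      rw [hc0, hz0, zero_smul]
    rw [if_neg h1]
    rw [hker, finrank_bot] at hrn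
    omega

end Sig

/-- Let `ψ ∈ Ψ` and `1 ≤ r ≤ p`. For every point `(x,y)` and every
timelike `r`-dimensional subspace `π` of `(ℝ^{2p}, g_ψ)` (signature `(r,0)`), one has
`rank J(π) = p-1` if `r = 1` and `rank J(π) = p` if `r ≥ 2`; moreover `J(π)² = 0`, and any
two higher order Jacobi operators of timelike `r`-dimensional subspaces are similar:
`(ℝ^{2p}, g_ψ)` is Jordan Osserman of type `(r,0)`. -/
theorem stmt11 (p r : ℕ) (hp : 2 ≤ p) (hr1 : 1 ≤ r) (hrp : r ≤ p)
    (ψ : (Fin p → ℝ) → Fin p → Fin p → ℝ) (hψ : MemPsi ψ) :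
    (∀ (x y : Fin p → ℝ) (π : Submodule ℝ (VV p)) (e : Fin r → VV p) (ε : Fin r → ℝ),
      HasSignature (gpsi ψ x) π r 0 → IsOrthoBasis (gpsi ψ x) π e ε →
      (r = 1 → (hoJ ψ x e ε).rank = p - 1) ∧
      (2 ≤ r → (hoJ ψ x e ε).rank = p) ∧
      hoJ ψ x e ε * hoJ ψ x e ε = 0) ∧
    (∀ (x₁ y₁ x₂ y₂ : Fin p → ℝ) (π₁ π₂ : Submodule ℝ (VV p))
      (e₁ e₂ : Fin r → VV p) (ε₁ ε₂ : Fin r → ℝ),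
      HasSignature (gpsi ψ x₁) π₁ r 0 → IsOrthoBasis (gpsi ψ x₁) π₁ e₁ ε₁ →
      HasSignature (gpsi ψ x₂) π₂ r 0 → IsOrthoBasis (gpsi ψ x₂) π₂ e₂ ε₂ →
      MatSimilar (hoJ ψ x₁ e₁ ε₁) (hoJ ψ x₂ e₂ ε₂)) := by

  constructor
  · intro x y π e ε hsig hob
    have hrank : (hoJ ψ x e ε).rank = if r = 1 then p - 1 else p := by
      rw [hoJ_eq, rank_fb]
      exact Mblk_rank hψ hr1 hsig hob
    exact ⟨fun h1 => by rw [hrank, if_pos h1],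
      fun h2 => by rw [hrank, if_neg (by omega)], hoJ_sq x e ε⟩
  · intro x₁ y₁ x₂ y₂ π₁ π₂ e₁ e₂ ε₁ ε₂ hsig₁ hob₁ hsig₂ hob₂
    have hrk₁ := Mblk_rank hψ hr1 hsig₁ hob₁
    have hrk₂ := Mblk_rank hψ hr1 hsig₂ hob₂
    obtain ⟨W, U, hW, hU, hMeq⟩ :=
      exists_mul_eq_of_rank_eq (Mblk ψ x₁ e₁ ε₁) (Mblk ψ x₂ e₂ ε₂) (hrk₁.trans hrk₂.symm)
    refine ⟨Matrix.fromBlocks U⁻¹ 0 0 W, ?_, ?_⟩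
    · rw [Matrix.det_fromBlocks_zero₂₁]
      exact (Matrix.isUnit_nonsing_inv_det U hU).mul hW
    · have hPinv : (Matrix.fromBlocks U⁻¹ 0 0 W)⁻¹ = Matrix.fromBlocks U 0 0 W⁻¹ := by
        apply Matrix.inv_eq_right_inv
        rw [Matrix.fromBlocks_multiply]
        simp only [Matrix.mul_zero, Matrix.zero_mul, add_zero, zero_add,
          Matrix.nonsing_inv_mul U hU, Matrix.mul_nonsing_inv W hW]
        exact Matrix.fromBlocks_one
      rw [hPinv, hoJ_eq x₁ e₁ ε₁, hoJ_eq x₂ e₂ ε₂, Matrix.fromBlocks_multiply,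
        Matrix.fromBlocks_multiply]
      simp only [Matrix.mul_zero, Matrix.zero_mul, add_zero, zero_add, Matrix.zero_mul]
      rw [hMeq]
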